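/- Let P ⊂ ℝ² be a lattice polygon with e_□(P) = l. Suppose Δ_P(x+y) ≥ l and Δ_P(x−y) ≥ l. Then the lattice width of P satisfies w(P) = min(Δ_P(x), Δ_P(y)). -/

import Mathlib

/-- The lattice polygon determined by a nonempty finite set `V` of lattice points:
the convex hull in `ℝ²` of the corresponding real points. -/
def latticePoly2 (V : Finset (Fin 2 → ℤ)) : Set (Fin 2 → ℝ) :=
  convexHull ℝ ((fun v : Fin 2 → ℤ => fun i => (v i : ℝ)) '' (V : Set (Fin 2 → ℤ)))

/-- `Δ_P(a₀·x + a₁·y) = w_a(P)`, the lattice width of `P ⊆ ℝ²` in the direction `a ∈ ℤ²`: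
the sup minus the inf of the linear form `p ↦ a·p` over `P`. -/
noncomputable def width2 (P : Set (Fin 2 → ℝ)) (a : Fin 2 → ℤ) : ℝ :=
  sSup ((fun p => ∑ i, (a i : ℝ) * p i) '' P) - sInf ((fun p => ∑ i, (a i : ℝ) * p i) '' P)

/-- `T(P) ⊆ [0,l]²` for some affine unimodular transformation `T : p ↦ A·p + v`. -/
def FitsInSquare (P : Set (Fin 2 → ℝ)) (l : ℤ) : Prop :=
  ∃ (A : Matrix (Fin 2) (Fin 2) ℤ) (v : Fin 2 → ℤ),
    (A.det = 1 ∨ A.det = -1) ∧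
    ∀ p ∈ P, ∀ i, ((A.map (fun z : ℤ => (z : ℝ))).mulVec p + fun j => (v j : ℝ)) i ∈
      Set.Icc (0 : ℝ) (l : ℝ)

/-- The set of lattice widths of `P` in all primitive directions `a ∈ ℤ²`. -/
def widthSet2 (P : Set (Fin 2 → ℝ)) : Set ℝ :=
  {w | ∃ a : Fin 2 → ℤ, Int.gcd (a 0) (a 1) = 1 ∧ width2 P a = w}

/-- `T(P) ⊆ [0,a] × [0,b]` for some affine unimodular transformation `T : p ↦ A·p + v`. -/
def FitsInRect (P : Set (Fin 2 → ℝ)) (a b : ℤ) : Prop :=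
  ∃ (A : Matrix (Fin 2) (Fin 2) ℤ) (v : Fin 2 → ℤ),
    (A.det = 1 ∨ A.det = -1) ∧
    ∀ p ∈ P, ((A.map (fun z : ℤ => (z : ℝ))).mulVec p + fun j => (v j : ℝ)) 0 ∈
        Set.Icc (0 : ℝ) (a : ℝ) ∧
      ((A.map (fun z : ℤ => (z : ℝ))).mulVec p + fun j => (v j : ℝ)) 1 ∈
        Set.Icc (0 : ℝ) (b : ℝ)

/-!
A direction `a` with a zero coordinate is an integer multiple of `e₁` or `e₂`, so its width is
at least `Δ_P(x)` or `Δ_P(y)`. If both coordinates of `a` are nonzero, pick the diagonal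
`(1, ε)`, `ε = ±1`, with `a₀ · ε a₁ ≥ 0`, and points `p, q ∈ P` realising its width. The
coordinate differences `d₀ = p₀ - q₀` and `ε d₁` are bounded by `l` in absolute value while
their sum is at least `l`, so both are nonnegative; as `a₀` and `ε a₁` have the same sign and
absolute value at least `1`, `|a · (p - q)| ≥ d₀ + ε d₁ ≥ l ≥ min(Δ_P(x), Δ_P(y))`.
-/

def linForm (a : Fin 2 → ℤ) (p : Fin 2 → ℝ) : ℝ := ∑ i, (a i : ℝ) * p i

lemma linForm_apply (a : Fin 2 → ℤ) (p : Fin 2 → ℝ) :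
    linForm a p = a 0 * p 0 + a 1 * p 1 := by
  simp [linForm, Fin.sum_univ_two]

lemma linForm_sub (a : Fin 2 → ℤ) (p q : Fin 2 → ℝ) :
    linForm a p - linForm a q = a 0 * (p 0 - q 0) + a 1 * (p 1 - q 1) := by
  simp only [linForm_apply]; ring

lemma linForm_smul (c : ℤ) (a : Fin 2 → ℤ) (p : Fin 2 → ℝ) :
    linForm (c • a) p = c * linForm a p := by
  simp only [linForm_apply, Pi.smul_apply, smul_eq_mul, Int.cast_mul]; ring

lemma continuous_linForm (a : Fin 2 → ℤ) : Continuous (linForm a) := by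
  unfold linForm; fun_prop

lemma width2_eq (P : Set (Fin 2 → ℝ)) (a : Fin 2 → ℤ) :
    width2 P a = sSup (linForm a '' P) - sInf (linForm a '' P) := rfl

lemma isCompact_latticePoly2 (V : Finset (Fin 2 → ℤ)) : IsCompact (latticePoly2 V) :=
  (V.finite_toSet.image _).isCompact_convexHull ℝ

lemma latticePoly2_nonempty {V : Finset (Fin 2 → ℤ)} (hV : V.Nonempty) :
    (latticePoly2 V).Nonempty :=
  ((hV.to_set).image _).convexHull

lemma le_abs_mul_add_mul {a b x y l : ℝ} (ha : 1 ≤ |a|) (hb : 1 ≤ |b|) (hab : 0 ≤ a * b)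
    (hx : |x| ≤ l) (hy : |y| ≤ l) (hxy : l ≤ x + y) : l ≤ |a * x + b * y| := by
  have hx0 : 0 ≤ x := by linarith [le_abs_self y]
  have hy0 : 0 ≤ y := by linarith [le_abs_self x]
  rcases abs_cases a with ⟨haa, ha0⟩ | ⟨haa, ha0⟩ <;>
    rcases abs_cases b with ⟨hbb, hb0⟩ | ⟨hbb, hb0⟩ <;> rw [haa] at ha <;> rw [hbb] at hb
  · rw [abs_of_nonneg (by positivity)]; nlinarith
  · nlinarith
  · nlinarith
  · rw [abs_of_nonpos (by nlinarith)]; nlinarith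

section Compact

variable {P : Set (Fin 2 → ℝ)}

lemma abs_linForm_sub_le_width2 (hP : IsCompact P) (a : Fin 2 → ℤ) {p q : Fin 2 → ℝ}
    (hp : p ∈ P) (hq : q ∈ P) : |linForm a p - linForm a q| ≤ width2 P a := by
  have hK := hP.image (continuous_linForm a)
  have hsup {x} (hx : x ∈ P) : linForm a x ≤ sSup (linForm a '' P) :=
    le_csSup hK.bddAbove (Set.mem_image_of_mem _ hx)
  have hinf {x} (hx : x ∈ P) : sInf (linForm a '' P) ≤ linForm a x :=
    csInf_le hK.bddBelow (Set.mem_image_of_mem _ hx)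
  rw [width2_eq, abs_sub_le_iff]
  constructor <;> linarith [hsup hp, hsup hq, hinf hp, hinf hq]

lemma exists_linForm_sub_eq_width2 (hP : IsCompact P) (hne : P.Nonempty) (a : Fin 2 → ℤ) :
    ∃ p ∈ P, ∃ q ∈ P, linForm a p - linForm a q = width2 P a := by
  have hK := hP.image (continuous_linForm a)
  obtain ⟨p, hp, hpsup⟩ := hK.sSup_mem (hne.image _)
  obtain ⟨q, hq, hqinf⟩ := hK.sInf_mem (hne.image _)
  exact ⟨p, hp, q, hq, by rw [hpsup, hqinf, width2_eq]⟩

lemma width2_le_width2_smul (hP : IsCompact P) (hne : P.Nonempty) {c : ℤ} (hc : c ≠ 0)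
    (a : Fin 2 → ℤ) : width2 P a ≤ width2 P (c • a) := by
  obtain ⟨p, hp, q, hq, hpq⟩ := exists_linForm_sub_eq_width2 hP hne a
  have hw : 0 ≤ width2 P a := (abs_nonneg _).trans (abs_linForm_sub_le_width2 hP a hp hq)
  have hc' : (1 : ℝ) ≤ |(c : ℝ)| := by rw [← Int.cast_abs]; exact_mod_cast Int.one_le_abs hc
  calc width2 P a ≤ |(c : ℝ)| * width2 P a := le_mul_of_one_le_left hw hc'
    _ = |linForm (c • a) p - linForm (c • a) q| := by
      rw [linForm_smul, linForm_smul, ← mul_sub, hpq, abs_mul, abs_of_nonneg hw]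
    _ ≤ width2 P (c • a) := abs_linForm_sub_le_width2 hP _ hp hq

lemma le_width2_of_le_width2_diag (hP : IsCompact P) (hne : P.Nonempty) {l : ℝ}
    (hx : width2 P ![1, 0] ≤ l) (hy : width2 P ![0, 1] ≤ l) {ε : ℤ} (hε : ε = 1 ∨ ε = -1)
    (hdiag : l ≤ width2 P ![1, ε]) {a : Fin 2 → ℤ} (ha0 : a 0 ≠ 0) (ha1 : a 1 ≠ 0)
    (hsign : 0 ≤ a 0 * (ε * a 1)) : l ≤ width2 P a := by
  obtain ⟨p, hp, q, hq, hpq⟩ := exists_linForm_sub_eq_width2 hP hne ![1, ε]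
  have hε2 : (ε : ℝ) * ε = 1 := by rcases hε with rfl | rfl <;> norm_num
  have hεabs : |(ε : ℝ)| = 1 := by rcases hε with rfl | rfl <;> norm_num
  have hd0 : |p 0 - q 0| ≤ l := by
    simpa [linForm_sub] using (abs_linForm_sub_le_width2 hP ![1, 0] hp hq).trans hx
  have hd1 : |ε * (p 1 - q 1)| ≤ l := by
    simpa [linForm_sub, abs_mul, hεabs] using
      (abs_linForm_sub_le_width2 hP ![0, 1] hp hq).trans hy
  have hdiag' : l ≤ (p 0 - q 0) + ε * (p 1 - q 1) := by
    simpa [linForm_sub] using hdiag.trans_eq hpq.symm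
  calc l ≤ |a 0 * (p 0 - q 0) + (ε * a 1) * (ε * (p 1 - q 1))| :=
        le_abs_mul_add_mul (by exact_mod_cast Int.one_le_abs ha0)
          (by rw [abs_mul, hεabs, one_mul]; exact_mod_cast Int.one_le_abs ha1)
          (by exact_mod_cast hsign) hd0 hd1 hdiag'
    _ = |linForm a p - linForm a q| := by
        rw [linForm_sub]; congr 1; linear_combination (a 1 * (p 1 - q 1)) * hε2
    _ ≤ width2 P a := abs_linForm_sub_le_width2 hP a hp hq

end Compact

/-- If `e_□(P) = l` and `Δ_P(x+y) ≥ l`, `Δ_P(x−y) ≥ l`, then the lattice width of `P`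
(the minimum of `w_a(P)` over all primitive `a ∈ ℤ²`) equals `min(Δ_P(x), Δ_P(y))`. -/
theorem latticeWidth_eq_of_diag_ge (V : Finset (Fin 2 → ℤ)) (hV : V.Nonempty)
    (P : Set (Fin 2 → ℝ)) (hP : P = latticePoly2 V) (l : ℤ)
    (he : max (width2 P ![1, 0]) (width2 P ![0, 1]) = (l : ℝ))
    (h1 : (l : ℝ) ≤ width2 P ![1, 1]) (h2 : (l : ℝ) ≤ width2 P ![1, -1]) :
    IsLeast (widthSet2 P) (min (width2 P ![1, 0]) (width2 P ![0, 1])) := by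
  subst hP
  have hK := isCompact_latticePoly2 V
  have hne := latticePoly2_nonempty hV
  have hx : width2 (latticePoly2 V) ![1, 0] ≤ l := he ▸ le_max_left _ _
  have hy : width2 (latticePoly2 V) ![0, 1] ≤ l := he ▸ le_max_right _ _
  refine ⟨?_, ?_⟩
  · rcases le_total (width2 (latticePoly2 V) ![1, 0]) (width2 (latticePoly2 V) ![0, 1])
      with h | h
    · exact ⟨![1, 0], by simp, (min_eq_left h).symm⟩
    · exact ⟨![0, 1], by simp, (min_eq_right h).symm⟩
  rintro _ ⟨a, hgcd, rfl⟩
  by_cases ha0 : a 0 = 0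
  · have ha1 : a 1 ≠ 0 := by rintro h; simp [ha0, h] at hgcd
    have ha : a = a 1 • ![0, 1] := by ext i; fin_cases i <;> simp [ha0]
    exact ha ▸ (min_le_right _ _).trans (width2_le_width2_smul hK hne ha1 _)
  by_cases ha1 : a 1 = 0
  · have ha : a = a 0 • ![1, 0] := by ext i; fin_cases i <;> simp [ha1]
    exact ha ▸ (min_le_left _ _).trans (width2_le_width2_smul hK hne ha0 _)
  obtain ⟨ε, hε, hdiag, hsign⟩ : ∃ ε : ℤ, (ε = 1 ∨ ε = -1) ∧
      (l : ℝ) ≤ width2 (latticePoly2 V) ![1, ε] ∧ 0 ≤ a 0 * (ε * a 1) := by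
    rcases le_total 0 (a 0 * a 1) with h | h
    · exact ⟨1, .inl rfl, h1, by linarith⟩
    · exact ⟨-1, .inr rfl, h2, by linarith⟩
  exact (min_le_left _ _).trans
    (hx.trans (le_width2_of_le_width2_diag hK hne hx hy hε hdiag ha0 ha1 hsign))
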